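/- arXiv:2103.12585 — 2 statements merged into one kernel-verified Lean document; each statement's English description precedes it below -/
import Mathlib

section
/- Let K ⊆ ℝ^m be a nonempty compact convex set and F : K → ℝ^m a continuous monotone mapping. Then the solution set S := {x ∈ K : (y − x)ᵀ F(x) ≥ 0 for all y ∈ K} of the variational inequality VI(K, F) is nonempty, compact, and convex. -/
/-!
By monotonicity a solution of `VI(K, F)` is a Minty solution: `(y - x) ⬝ᵥ F y ≥ 0` for all `y ∈ K`.
Conversely (Minty's lemma), letting `z = x + t (y - x)` tend to `x` in `(z - x) ⬝ᵥ F z ≥ 0` shows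
that a Minty solution is a solution. The Minty solutions are `K` cut by closed half-spaces, hence
compact and convex, and by compactness they are nonempty once the half-spaces of finitely many
`y₁, …, yₖ ∈ K` meet `K`. That follows from Sion's minimax theorem for
`(x, q) ↦ ∑ᵢ qᵢ (x - yᵢ) ⬝ᵥ F yᵢ` on `K × Δₖ`: at a saddle point `(a, b)` every `(a - yᵢ) ⬝ᵥ F yᵢ`
is at most the value at `(∑ⱼ bⱼ yⱼ, b)`, which monotonicity makes `≤ 0`.
-/

open Matrix Finset

theorem sum_sum_mul_mul_nonpos_of_add_swap_nonpos {R ι : Type*} [CommRing R] [LinearOrder R]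
    [IsStrictOrderedRing R] [Fintype ι] {A : ι → ι → R} (hA : ∀ i j, A i j + A j i ≤ 0)
    {b : ι → R} (hb : 0 ≤ b) :
    ∑ i, ∑ j, b i * b j * A i j ≤ 0 := by
  have hswap : ∑ i, ∑ j, b i * b j * A i j = ∑ i, ∑ j, b i * b j * A j i := by
    rw [sum_comm]
    simp only [mul_comm (b _) (b _)]
  have hsym : ∑ i, ∑ j, b i * b j * (A i j + A j i) ≤ 0 :=
    sum_nonpos fun i _ => sum_nonpos fun j _ =>
      mul_nonpos_of_nonneg_of_nonpos (mul_nonneg (hb i) (hb j)) (hA i j)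
  simp only [mul_add, sum_add_distrib, ← hswap] at hsym
  linarith

section

variable {n : Type*} [Fintype n]

theorem sum_mul_sum_smul_sub_dotProduct_nonpos {ι : Type*} [Fintype ι] {y w : ι → n → ℝ}
    (hw : ∀ i j, 0 ≤ (w i - w j) ⬝ᵥ (y i - y j)) {b : ι → ℝ} (hb : b ∈ stdSimplex ℝ ι) :
    ∑ i, b i * ((∑ j, b j • y j - y i) ⬝ᵥ w i) ≤ 0 := by
  have hcentre : ∀ i, ∑ j, b j • y j - y i = ∑ j, b j • (y j - y i) := fun i => by
    simp only [smul_sub, sum_sub_distrib, ← sum_smul, hb.2, one_smul]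
  calc ∑ i, b i * ((∑ j, b j • y j - y i) ⬝ᵥ w i)
      = ∑ i, ∑ j, b i * b j * ((y j - y i) ⬝ᵥ w i) := by
        simp only [hcentre, sum_dotProduct, smul_dotProduct, smul_eq_mul, mul_sum, mul_assoc]
    _ ≤ 0 := by
      refine sum_sum_mul_mul_nonpos_of_add_swap_nonpos (fun i j => ?_) hb.1
      have hpair : (y j - y i) ⬝ᵥ w i + (y i - y j) ⬝ᵥ w j = -((w i - w j) ⬝ᵥ (y i - y j)) := by
        rw [← neg_sub (y i), neg_dotProduct, dotProduct_comm (w i - w j), dotProduct_sub]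
        ring
      linarith [hw i j]

theorem isClosed_setOf_sub_dotProduct_nonneg (y v : n → ℝ) :
    IsClosed {x : n → ℝ | 0 ≤ (y - x) ⬝ᵥ v} :=
  isClosed_le continuous_const (by fun_prop)

theorem convex_setOf_sub_dotProduct_nonneg (y v : n → ℝ) :
    Convex ℝ {x : n → ℝ | 0 ≤ (y - x) ⬝ᵥ v} := by
  simp only [sub_dotProduct, sub_nonneg]
  exact convex_halfSpace_le ((dotProductBilin ℝ ℝ).flip v).isLinear _

theorem convexOn_dotProduct_sub_dotProduct {ι : Type*} [Fintype ι] (y w : ι → n → ℝ)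
    (q : ι → ℝ) {K : Set (n → ℝ)} (hK : Convex ℝ K) :
    ConvexOn ℝ K fun x => q ⬝ᵥ fun i => (x - y i) ⬝ᵥ w i := by
  have h : (fun x => q ⬝ᵥ fun i => (x - y i) ⬝ᵥ w i) =
      (fun x => x ⬝ᵥ ∑ i, q i • w i) + fun _ => -(q ⬝ᵥ fun i => y i ⬝ᵥ w i) := by
    ext x
    simp only [Pi.add_apply, dotProduct_sum, dotProduct_smul, sub_dotProduct, smul_eq_mul]
    simp only [dotProduct, mul_sub, sum_sub_distrib]
    ring
  rw [h]
  exact (((dotProductBilin ℝ ℝ).flip _).convexOn hK).add_const _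

theorem exists_forall_sub_dotProduct_nonneg_of_finite {ι : Type*} [Fintype ι] [Nonempty ι]
    {K : Set (n → ℝ)} (hKc : IsCompact K) (hKconv : Convex ℝ K) {F : (n → ℝ) → n → ℝ}
    {y : ι → n → ℝ} (hy : ∀ i, y i ∈ K)
    (hFmono : ∀ i j, 0 ≤ (F (y i) - F (y j)) ⬝ᵥ (y i - y j)) :
    ∃ x ∈ K, ∀ i, 0 ≤ (y i - x) ⬝ᵥ F (y i) := by
  classical
  have hΔ := convex_stdSimplex ℝ ι
  have hcont_x (q : ι → ℝ) : Continuous fun x => q ⬝ᵥ fun i => (x - y i) ⬝ᵥ F (y i) := by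
    fun_prop
  have hcont_q (x : n → ℝ) : Continuous fun q : ι → ℝ => q ⬝ᵥ fun i => (x - y i) ⬝ᵥ F (y i) := by
    fun_prop
  obtain ⟨a, haK, b, hb, hsaddle⟩ :=
    Sion.exists_isSaddlePointOn (f := fun x q => q ⬝ᵥ fun i => (x - y i) ⬝ᵥ F (y i))
      ⟨_, hy (Classical.arbitrary ι)⟩ hKconv hKc
      (fun q _ => (hcont_x q).lowerSemicontinuous.lowerSemicontinuousOn _)
      (fun q _ => (convexOn_dotProduct_sub_dotProduct y _ q hKconv).quasiconvexOn)
      hΔ ⟨_, single_mem_stdSimplex ℝ (Classical.arbitrary ι)⟩ (isCompact_stdSimplex ℝ ι)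
      (fun x _ => (hcont_q x).upperSemicontinuous.upperSemicontinuousOn _)
      (fun x _ => (((dotProductBilin ℝ ℝ).flip _).concaveOn hΔ).quasiconcaveOn)
  refine ⟨a, haK, fun i => ?_⟩
  have hcentre : ∑ j, b j • y j ∈ K :=
    hKconv.sum_mem (fun j _ => hb.1 j) hb.2 fun j _ => hy j
  have h := hsaddle _ hcentre _ (single_mem_stdSimplex ℝ i)
  simp only [single_one_dotProduct] at h
  have := sum_mul_sum_smul_sub_dotProduct_nonpos hFmono hb
  rw [← neg_sub, neg_dotProduct]
  exact neg_nonneg.2 (h.trans this)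

def mintySet (K : Set (n → ℝ)) (F : (n → ℝ) → n → ℝ) : Set (n → ℝ) :=
  {x ∈ K | ∀ y ∈ K, 0 ≤ (y - x) ⬝ᵥ F y}

variable {K : Set (n → ℝ)} {F : (n → ℝ) → n → ℝ}

theorem mintySet_eq_inter_iInter :
    mintySet K F = K ∩ ⋂ y : K, {x | 0 ≤ ((y : n → ℝ) - x) ⬝ᵥ F y} := by
  ext x
  simp [mintySet]

theorem isCompact_mintySet (hKc : IsCompact K) : IsCompact (mintySet K F) := by
  rw [mintySet_eq_inter_iInter]
  exact hKc.inter_right (isClosed_iInter fun y => isClosed_setOf_sub_dotProduct_nonneg _ _)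

theorem convex_mintySet (hKconv : Convex ℝ K) : Convex ℝ (mintySet K F) := by
  rw [mintySet_eq_inter_iInter]
  exact hKconv.inter (convex_iInter fun y => convex_setOf_sub_dotProduct_nonneg _ _)

theorem mintySet_nonempty (hKne : K.Nonempty) (hKc : IsCompact K) (hKconv : Convex ℝ K)
    (hFmono : ∀ x ∈ K, ∀ y ∈ K, 0 ≤ (F x - F y) ⬝ᵥ (x - y)) : (mintySet K F).Nonempty := by
  rw [mintySet_eq_inter_iInter]
  refine hKc.inter_iInter_nonempty _ (fun y => isClosed_setOf_sub_dotProduct_nonneg _ _)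
    fun u => ?_
  rcases u.eq_empty_or_nonempty with rfl | ⟨y₀, hy₀⟩
  · simpa using hKne
  · have : Nonempty u := ⟨⟨y₀, hy₀⟩⟩
    obtain ⟨x, hxK, hx⟩ := exists_forall_sub_dotProduct_nonneg_of_finite hKc hKconv
      (y := fun i : u => (i : K).1) (fun i => i.1.2) fun i j => hFmono _ i.1.2 _ j.1.2
    exact ⟨x, hxK, Set.mem_iInter₂.2 fun y hy => hx ⟨y, hy⟩⟩

theorem mem_mintySet_of_solution (hFmono : ∀ x ∈ K, ∀ y ∈ K, 0 ≤ (F x - F y) ⬝ᵥ (x - y))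
    {x : n → ℝ} (hx : x ∈ K) (hsol : ∀ y ∈ K, 0 ≤ (y - x) ⬝ᵥ F x) : x ∈ mintySet K F := by
  refine ⟨hx, fun y hy => ?_⟩
  have hsplit : (y - x) ⬝ᵥ F y = (y - x) ⬝ᵥ F x + (F y - F x) ⬝ᵥ (y - x) := by
    rw [dotProduct_comm (F y - F x), dotProduct_sub]
    ring
  linarith [hsol y hy, hFmono y hy x hx]

theorem sub_dotProduct_nonneg_of_mem_mintySet (hKconv : Convex ℝ K) (hF : ContinuousOn F K)
    {x y : n → ℝ} (hx : x ∈ mintySet K F) (hy : y ∈ K) : 0 ≤ (y - x) ⬝ᵥ F x := by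
  have hseg : ∀ t ∈ Set.Icc (0 : ℝ) 1, AffineMap.lineMap x y t ∈ K :=
    fun t ht => hKconv.lineMap_mem hx.1 hy ht
  set g : ℝ → ℝ := fun t => (y - x) ⬝ᵥ F (AffineMap.lineMap x y t)
  have hg : ContinuousOn g (Set.Icc 0 1) :=
    (continuous_const.dotProduct continuous_id).comp_continuousOn
      (hF.comp AffineMap.lineMap_continuous.continuousOn hseg)
  have hpos : ∀ t ∈ Set.Ioc (0 : ℝ) 1, 0 ≤ g t := fun t ht => by
    have h := hx.2 _ (hseg t (Set.Ioc_subset_Icc_self ht))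
    rw [← vsub_eq_sub, AffineMap.lineMap_vsub_left, vsub_eq_sub, smul_dotProduct,
      smul_eq_mul] at h
    exact (mul_nonneg_iff_of_pos_left ht.1).mp h
  rw [← closure_Ioc zero_ne_one] at hg
  have h0 : (0 : ℝ) ∈ closure (Set.Ioc 0 1) := by
    rw [closure_Ioc zero_ne_one]
    exact Set.left_mem_Icc.2 zero_le_one
  simpa [g] using le_on_closure hpos continuousOn_const hg h0

theorem setOf_solution_eq_mintySet (hKconv : Convex ℝ K) (hF : ContinuousOn F K)
    (hFmono : ∀ x ∈ K, ∀ y ∈ K, 0 ≤ (F x - F y) ⬝ᵥ (x - y)) :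
    {x ∈ K | ∀ y ∈ K, 0 ≤ (y - x) ⬝ᵥ F x} = mintySet K F :=
  Set.ext fun _ => ⟨fun hx => mem_mintySet_of_solution hFmono hx.1 hx.2,
    fun hx => ⟨hx.1, fun _ hy => sub_dotProduct_nonneg_of_mem_mintySet hKconv hF hx hy⟩⟩

end

/-- For a nonempty compact convex `K ⊆ ℝ^m` and a continuous monotone `F`,
the solution set of `VI(K, F)` is nonempty, compact and convex. -/
theorem VI_solution_set_nonempty_compact_convex (m : ℕ) (K : Set (Fin m → ℝ))
    (hKne : K.Nonempty) (hKc : IsCompact K) (hKconv : Convex ℝ K)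
    (F : (Fin m → ℝ) → (Fin m → ℝ)) (hFcont : Continuous F)
    (hFmono : ∀ x ∈ K, ∀ y ∈ K, 0 ≤ (F x - F y) ⬝ᵥ (x - y)) :
    ({x ∈ K | ∀ y ∈ K, 0 ≤ (y - x) ⬝ᵥ F x}).Nonempty ∧
    IsCompact {x ∈ K | ∀ y ∈ K, 0 ≤ (y - x) ⬝ᵥ F x} ∧
    Convex ℝ {x ∈ K | ∀ y ∈ K, 0 ≤ (y - x) ⬝ᵥ F x} := by
  rw [setOf_solution_eq_mintySet hKconv hFcont.continuousOn hFmono]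
  exact ⟨mintySet_nonempty hKne hKc hKconv hFmono, isCompact_mintySet hKc, convex_mintySet hKconv⟩
end

section
/- Let S_{K+1} ⊆ S_K ⊆ ℝ^m be the solution sets of VI(P_{K+1}, F) and VI(P_K, F) respectively, where P_{K+1} = P_K ∩ Q for closed convex sets P_K, Q, F is continuous and monotone, and the affine hull of S_{K+1} equals ℝ^m (so S_{K+1} has nonempty interior). Then S_{K+1} = S_K ∩ Q. -/
/-!
For two solutions `x, z` of `VI(P, F)`, the two variational inequalities give
`0 ≤ (z - x) ⬝ᵥ F x` and `0 ≤ (x - z) ⬝ᵥ F z`, while monotonicity gives the reverse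
inequality of their sum; hence `(z - x) ⬝ᵥ F x = 0`. So `F x` is orthogonal to every
difference of solutions, and when the solutions affinely span the whole space this forces
`F x = 0`. Every solution of `VI(P_K ∩ Q, F)` is then a zero of `F`, which solves
`VI(P_K, F)` trivially.
-/

open Matrix

variable {𝕜 ι : Type*} [Field 𝕜] [LinearOrder 𝕜] [Fintype ι]

/-- The set `S(P)` of the paper. -/
def viSolutionSet (P : Set (ι → 𝕜)) (F : (ι → 𝕜) → ι → 𝕜) : Set (ι → 𝕜) :=
  {x ∈ P | ∀ y ∈ P, 0 ≤ (y - x) ⬝ᵥ F x}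

theorem viSolutionSet_inter_subset (P Q : Set (ι → 𝕜)) (F : (ι → 𝕜) → ι → 𝕜) :
    viSolutionSet P F ∩ Q ⊆ viSolutionSet (P ∩ Q) F :=
  fun _ ⟨⟨hxP, hx⟩, hxQ⟩ => ⟨⟨hxP, hxQ⟩, fun y hy => hx y hy.1⟩

theorem mem_viSolutionSet_of_apply_eq_zero {P : Set (ι → 𝕜)} {F : (ι → 𝕜) → ι → 𝕜}
    {x : ι → 𝕜} (hxP : x ∈ P) (hFx : F x = 0) : x ∈ viSolutionSet P F :=
  ⟨hxP, fun y _ => by rw [hFx, dotProduct_zero]⟩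

theorem dotProduct_sub_apply_eq_zero_of_mem_viSolutionSet [IsStrictOrderedRing 𝕜]
    {P : Set (ι → 𝕜)} {F : (ι → 𝕜) → ι → 𝕜} (hFmono : ∀ x y, 0 ≤ (F x - F y) ⬝ᵥ (x - y))
    {x z : ι → 𝕜} (hx : x ∈ viSolutionSet P F) (hz : z ∈ viSolutionSet P F) :
    (z - x) ⬝ᵥ F x = 0 := by
  have hxz : 0 ≤ (z - x) ⬝ᵥ F x := hx.2 z hz.1
  have hzx : 0 ≤ (x - z) ⬝ᵥ F z := hz.2 x hx.1
  have hmono : 0 ≤ (F z - F x) ⬝ᵥ (z - x) := hFmono z x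
  have hsum : (F z - F x) ⬝ᵥ (z - x) + (z - x) ⬝ᵥ F x + (x - z) ⬝ᵥ F z = 0 := by
    simp only [sub_dotProduct, dotProduct_sub, dotProduct_comm (F x), dotProduct_comm (F z)]
    ring
  linarith

theorem eq_zero_of_forall_dotProduct_sub_eq_zero [IsStrictOrderedRing 𝕜] {s : Set (ι → 𝕜)}
    (hs : affineSpan 𝕜 s = ⊤) {x v : ι → 𝕜} (hv : ∀ z ∈ s, (z - x) ⬝ᵥ v = 0) : v = 0 := by
  have hspan : vectorSpan 𝕜 s ≤ LinearMap.ker ((dotProductBilin 𝕜 𝕜).flip v) := by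
    rw [vectorSpan_def, Submodule.span_le]
    rintro _ ⟨z₁, hz₁, z₂, hz₂, rfl⟩
    have hdiff : z₁ -ᵥ z₂ = (z₁ - x) - (z₂ - x) := by rw [vsub_eq_sub]; abel
    change (z₁ -ᵥ z₂) ⬝ᵥ v = 0
    rw [hdiff, sub_dotProduct, hv z₁ hz₁, hv z₂ hz₂, sub_zero]
  rw [AffineSubspace.vectorSpan_eq_top_of_affineSpan_eq_top _ _ _ hs] at hspan
  exact dotProduct_self_eq_zero.mp (hspan (Submodule.mem_top (x := v)))

theorem apply_eq_zero_of_mem_viSolutionSet [IsStrictOrderedRing 𝕜] {P : Set (ι → 𝕜)}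
    {F : (ι → 𝕜) → ι → 𝕜} (hFmono : ∀ x y, 0 ≤ (F x - F y) ⬝ᵥ (x - y))
    (haff : affineSpan 𝕜 (viSolutionSet P F) = ⊤) {x : ι → 𝕜} (hx : x ∈ viSolutionSet P F) :
    F x = 0 :=
  eq_zero_of_forall_dotProduct_sub_eq_zero haff fun _ hz =>
    dotProduct_sub_apply_eq_zero_of_mem_viSolutionSet hFmono hx hz

theorem VI_solution_set_intersection_general (m : ℕ) (PK Q : Set (Fin m → ℝ))
    (F : (Fin m → ℝ) → (Fin m → ℝ))
    (hFmono : ∀ x y : Fin m → ℝ, 0 ≤ (F x - F y) ⬝ᵥ (x - y))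
    (haff : affineSpan ℝ {x ∈ PK ∩ Q | ∀ y ∈ PK ∩ Q, 0 ≤ (y - x) ⬝ᵥ F x} = ⊤) :
    {x ∈ PK ∩ Q | ∀ y ∈ PK ∩ Q, 0 ≤ (y - x) ⬝ᵥ F x} =
      {x ∈ PK | ∀ y ∈ PK, 0 ≤ (y - x) ⬝ᵥ F x} ∩ Q := by
  change viSolutionSet (PK ∩ Q) F = viSolutionSet PK F ∩ Q
  refine subset_antisymm (fun x hx => ⟨?_, hx.1.2⟩) (viSolutionSet_inter_subset PK Q F)
  exact mem_viSolutionSet_of_apply_eq_zero hx.1.1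
    (apply_eq_zero_of_mem_viSolutionSet hFmono haff hx)

/-- Lemma 2 of the paper: if the solution set of the intersected VI is full-dimensional,
then `S(P_K ∩ Q) = S(P_K) ∩ Q`. -/
theorem VI_solution_set_intersection (m : ℕ) (PK Q : Set (Fin m → ℝ))
    (hPne : PK.Nonempty) (hPc : IsCompact PK) (hPconv : Convex ℝ PK)
    (hQclosed : IsClosed Q) (hQconv : Convex ℝ Q) (hne : (PK ∩ Q).Nonempty)
    (F : (Fin m → ℝ) → (Fin m → ℝ)) (hFcont : Continuous F)
    (hFmono : ∀ x y : Fin m → ℝ, 0 ≤ (F x - F y) ⬝ᵥ (x - y))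
    (haff : affineSpan ℝ {x ∈ PK ∩ Q | ∀ y ∈ PK ∩ Q, 0 ≤ (y - x) ⬝ᵥ F x} = ⊤) :
    {x ∈ PK ∩ Q | ∀ y ∈ PK ∩ Q, 0 ≤ (y - x) ⬝ᵥ F x} =
      {x ∈ PK | ∀ y ∈ PK, 0 ≤ (y - x) ⬝ᵥ F x} ∩ Q :=
  VI_solution_set_intersection_general m PK Q F hFmono haff
end
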